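/- arXiv:2107.11363 — 8 statements merged into one kernel-verified Lean document; each statement's English description precedes it below -/
import Mathlib

section
/- Let n ∈ ℕ, n ≥ 1, m ∈ ℕ with m ≤ n, and for z ∈ ℂ define Q(z) = (z^{m+n+1}/m!) ∫₀¹ t^m (1-t)^n e^{-zt} dt. Then for every z ∈ ℂ with z ≠ 0, Q(z) = ∑_{k=0}^{n} (-1)^{n-k} ((m+n-k)!/m!) C(n,k) z^k + e^{-z} ∑_{k=0}^{m} (-1)^{n-1} ((m+n-k)!/m!) C(m,k) z^k. -/
/-!
For a polynomial `p` with `p^(N+1) = 0`, put `G = ∑_{j ≤ N} z^(N-j) p^(j)`. Then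
`z G - G' = z^(N+1) p` telescopes, so `-e^(-zt) G(t)` is an antiderivative of `z^(N+1) p(t) e^(-zt)`
for every `z`. Applied to `p = X^m (1-X)^n` with `N = m + n`, the
integral becomes `G(0) - e^(-z) G(1)`. The derivatives of `p` at `0` are `j!` times its
coefficients, and those at `1` are obtained in the same way after the substitution `t ↦ 1 - t`,
which swaps the roles of `m` and `n`.
-/

open Polynomial Finset Complex
open scoped Nat

theorem Finset.sum_range_add_succ_eq_sum_reflect {M : Type*} [AddCommMonoid M] (f : ℕ → M)
    (a b : ℕ) (hf : ∀ j < a, f j = 0) :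
    ∑ j ∈ range (a + b + 1), f j = ∑ k ∈ range (b + 1), f (a + b - k) := by
  rw [← sum_range_reflect, show a + b + 1 = b + 1 + a by omega, sum_range_add]
  rw [sum_eq_zero (s := range a) fun i hi => hf _ (by rw [mem_range] at hi; omega), add_zero]
  refine sum_congr rfl fun k _ => ?_
  congr 1
  omega

namespace Polynomial

variable {R : Type*} [CommRing R]

theorem coeff_one_sub_X_pow (b i : ℕ) :
    ((1 - X : R[X]) ^ b).coeff i = (-1 : R) ^ i * b.choose i := by
  have hexpand :
      (1 - X : R[X]) ^ b = ∑ k ∈ range (b + 1), C ((-1 : R) ^ k * b.choose k) * X ^ k := by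
    rw [sub_eq_neg_add, add_pow]
    refine sum_congr rfl fun k _ => ?_
    rw [one_pow, mul_one, neg_pow, C_mul, C_pow, C_neg, C_1, map_natCast]
    ring
  rw [hexpand, finsetSum_coeff]
  simp only [coeff_C_mul_X_pow]
  rw [sum_ite_eq]
  split_ifs with hi
  · rfl
  · rw [Nat.choose_eq_zero_of_lt (by simpa using hi), Nat.cast_zero, mul_zero]

theorem coeff_X_pow_mul_one_sub_X_pow (a b j : ℕ) :
    (X ^ a * (1 - X : R[X]) ^ b).coeff j =
      if a ≤ j then (-1 : R) ^ (j - a) * b.choose (j - a) else 0 := by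
  rw [coeff_X_pow_mul', coeff_one_sub_X_pow]

theorem iterate_derivative_eval_zero (p : R[X]) (j : ℕ) :
    (derivative^[j] p).eval 0 = j ! * p.coeff j := by
  rw [← coeff_zero_eq_eval_zero, coeff_iterate_derivative, zero_add, Nat.descFactorial_self,
    nsmul_eq_mul]

theorem iterate_derivative_eval_one (p : R[X]) (j : ℕ) :
    (derivative^[j] p).eval 1 = (-1) ^ j * (derivative^[j] (p.comp (1 - X))).eval 0 := by
  simp [← mul_assoc, ← mul_pow]

theorem C_mul_sub_derivative_sum_iterate_derivative (z : R) (p : R[X]) (N : ℕ) :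
    C z * ∑ j ∈ range (N + 1), C z ^ (N - j) * derivative^[j] p
        - derivative (∑ j ∈ range (N + 1), C z ^ (N - j) * derivative^[j] p) =
      C z ^ (N + 1) * p - derivative^[N + 1] p := by
  induction N with
  | zero => simp
  | succ N ih =>
    have hsucc : ∑ j ∈ range (N + 1 + 1), C z ^ (N + 1 - j) * derivative^[j] p =
        C z * ∑ j ∈ range (N + 1), C z ^ (N - j) * derivative^[j] p + derivative^[N + 1] p := by
      rw [sum_range_succ, mul_sum, Nat.sub_self, pow_zero, one_mul]
      congr 1
      refine sum_congr rfl fun j hj => ?_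
      rw [← mul_assoc, ← pow_succ', Nat.sub_add_comm (mem_range_succ_iff.1 hj)]
    rw [hsucc, derivative_add, derivative_mul, derivative_C, zero_mul, zero_add,
      ← Function.iterate_succ_apply' derivative]
    linear_combination C z * ih

theorem sum_pow_mul_iterate_derivative_X_pow_mul_one_sub_X_pow_eval_zero (z : R) (a b : ℕ) :
    ∑ j ∈ range (a + b + 1),
        z ^ (a + b - j) * (derivative^[j] (X ^ a * (1 - X : R[X]) ^ b)).eval 0 =
      ∑ k ∈ range (b + 1), (-1) ^ (b - k) * ((a + b - k)! : R) * b.choose k * z ^ k := by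
  simp only [iterate_derivative_eval_zero, coeff_X_pow_mul_one_sub_X_pow]
  rw [sum_range_add_succ_eq_sum_reflect _ a b]
  · refine sum_congr rfl fun k hk => ?_
    rw [mem_range] at hk
    rw [if_pos (by omega), Nat.sub_sub_self (by omega), show a + b - k - a = b - k by omega,
      Nat.choose_symm (by omega)]
    ring
  · intro j hj
    rw [if_neg (by omega), mul_zero, mul_zero]

theorem sum_pow_mul_iterate_derivative_X_pow_mul_one_sub_X_pow_eval_one (z : R) (a b : ℕ) :
    ∑ j ∈ range (a + b + 1),
        z ^ (a + b - j) * (derivative^[j] (X ^ a * (1 - X : R[X]) ^ b)).eval 1 =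
      ∑ k ∈ range (a + 1), (-1) ^ b * ((a + b - k)! : R) * a.choose k * z ^ k := by
  have hcomp : (X ^ a * (1 - X : R[X]) ^ b).comp (1 - X) = X ^ b * (1 - X) ^ a := by
    simp [mul_comm]
  simp only [iterate_derivative_eval_one, hcomp, iterate_derivative_eval_zero,
    coeff_X_pow_mul_one_sub_X_pow]
  rw [add_comm a b, sum_range_add_succ_eq_sum_reflect _ b a]
  · refine sum_congr rfl fun k hk => ?_
    obtain ⟨i, rfl⟩ := Nat.exists_eq_add_of_le (mem_range_succ_iff.1 hk)
    have hsq : (-1 : R) ^ i * (-1) ^ i = 1 := by rw [← mul_pow]; simp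
    rw [if_pos (by omega), show b + (k + i) - k = b + i by omega, Nat.add_sub_cancel_left,
      show b + (k + i) - (b + i) = k by omega, ← Nat.choose_symm_add, pow_add]
    linear_combination (-1 : R) ^ b * ((b + i)! : R) * ((k + i).choose k) * z ^ k * hsq
  · intro j hj
    rw [if_neg (by omega), mul_zero, mul_zero, mul_zero]

end Polynomial

theorem integral_eval_C_mul_sub_derivative_mul_cexp (G : ℂ[X]) (z : ℂ) (a b : ℝ) :
    ∫ t in a..b, (C z * G - derivative G).eval (t : ℂ) * cexp (-z * t) =
      cexp (-z * a) * G.eval (a : ℂ) - cexp (-z * b) * G.eval (b : ℂ) := by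
  have hderiv : ∀ t : ℝ, HasDerivAt (fun t : ℝ => -(cexp (-z * t) * G.eval (t : ℂ)))
      ((C z * G - derivative G).eval (t : ℂ) * cexp (-z * t)) t := by
    intro t
    have hexp : HasDerivAt (fun t : ℝ => cexp (-z * t)) (cexp (-z * t) * (-z * 1)) t :=
      ((hasDerivAt_id (t : ℂ)).const_mul (-z)).cexp.comp_ofReal
    refine (hexp.mul (G.hasDerivAt (t : ℂ)).comp_ofReal).neg.congr_deriv ?_
    simp only [eval_sub, eval_mul, eval_C]
    ring
  rw [intervalIntegral.integral_eq_sub_of_hasDerivAt (fun t _ => hderiv t)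
    (Continuous.intervalIntegrable (by fun_prop) _ _)]
  ring

theorem pow_mul_integral_eval_mul_cexp (p : ℂ[X]) (z : ℂ) {N : ℕ}
    (hp : derivative^[N + 1] p = 0) (a b : ℝ) :
    z ^ (N + 1) * ∫ t in a..b, p.eval (t : ℂ) * cexp (-z * t) =
      cexp (-z * a) * ∑ j ∈ range (N + 1), z ^ (N - j) * (derivative^[j] p).eval (a : ℂ) -
      cexp (-z * b) * ∑ j ∈ range (N + 1), z ^ (N - j) * (derivative^[j] p).eval (b : ℂ) := by
  have h := integral_eval_C_mul_sub_derivative_mul_cexp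
    (∑ j ∈ range (N + 1), C z ^ (N - j) * derivative^[j] p) z a b
  rw [C_mul_sub_derivative_sum_iterate_derivative, hp, sub_zero] at h
  simpa [eval_finsetSum, ← intervalIntegral.integral_const_mul, mul_assoc] using h

theorem stmt_5_general (n m : ℕ) (hn : 1 ≤ n) (z : ℂ) :
    (z ^ (m + n + 1) / (m.factorial : ℂ)) *
        ∫ t in (0:ℝ)..1, (t : ℂ) ^ m * (1 - (t : ℂ)) ^ n * Complex.exp (-z * t) =
      (∑ k ∈ Finset.range (n + 1),
        (-1 : ℂ) ^ (n - k) * (((m + n - k).factorial : ℂ) / (m.factorial : ℂ)) *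
          (n.choose k : ℂ) * z ^ k)
      + Complex.exp (-z) *
        ∑ k ∈ Finset.range (m + 1),
          (-1 : ℂ) ^ (n - 1) * (((m + n - k).factorial : ℂ) / (m.factorial : ℂ)) *
            (m.choose k : ℂ) * z ^ k := by
  have hp : derivative^[m + n + 1] (X ^ m * (1 - X : ℂ[X]) ^ n) = 0 :=
    iterate_derivative_eq_zero (Nat.lt_succ_of_le (by compute_degree))
  have key := pow_mul_integral_eval_mul_cexp _ z hp 0 1
  simp only [ofReal_zero, ofReal_one, mul_zero, exp_zero, one_mul, mul_one] at key
  rw [sum_pow_mul_iterate_derivative_X_pow_mul_one_sub_X_pow_eval_zero,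
    sum_pow_mul_iterate_derivative_X_pow_mul_one_sub_X_pow_eval_one] at key
  simp only [eval_mul, eval_pow, eval_sub, eval_one, eval_X] at key
  obtain ⟨n, rfl⟩ : ∃ n', n = n' + 1 := ⟨n - 1, by omega⟩
  rw [div_mul_eq_mul_div, key, sub_div, sum_div, mul_div_assoc, sum_div, sub_eq_add_neg,
    ← mul_neg, ← sum_neg_distrib, Nat.add_sub_cancel]
  congr 1
  · exact sum_congr rfl fun k _ => by ring
  · exact congrArg _ (sum_congr rfl fun k _ => by ring)

theorem stmt_5 (n m : ℕ) (hn : 1 ≤ n) (hm : m ≤ n) (z : ℂ) (hz : z ≠ 0) :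
    (z ^ (m + n + 1) / (m.factorial : ℂ)) *
        ∫ t in (0:ℝ)..1, (t : ℂ) ^ m * (1 - (t : ℂ)) ^ n * Complex.exp (-z * t) =
      (∑ k ∈ Finset.range (n + 1),
        (-1 : ℂ) ^ (n - k) * (((m + n - k).factorial : ℂ) / (m.factorial : ℂ)) *
          (n.choose k : ℂ) * z ^ k)
      + Complex.exp (-z) *
        ∑ k ∈ Finset.range (m + 1),
          (-1 : ℂ) ^ (n - 1) * (((m + n - k).factorial : ℂ) / (m.factorial : ℂ)) *
            (m.choose k : ℂ) * z ^ k :=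
  stmt_5_general n m hn z
end

section
/- Let n ∈ ℕ, n ≥ 1, m ∈ ℕ with m ≤ n, and define the quasipolynomial Δ̃(z) = z^n + ∑_{k=0}^{n-1} b_k z^k + e^{-z} ∑_{k=0}^{m} β_k z^k with b_k = (-1)^{n-k} (n!/k!) C(m+n-k, m) and β_k = (-1)^{n-1} (m+n-k)!/(k!(m-k)!). Then z = 0 is a zero of Δ̃ of multiplicity exactly m+n+1, i.e., Δ̃^{(j)}(0) = 0 for all 0 ≤ j ≤ m+n and Δ̃^{(m+n+1)}(0) ≠ 0. -/
/-!
Write `Δ̃ = p + e^{-z} q`. By Leibniz's rule,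
`Δ̃^{(j)}(0) = j! b_j + ∑_{k ≤ m} β_k j!/(j-k)! (-1)^{j-k}`, and after inserting `β_k` the sum
is `(-1)^{n-1}` times the `j`-th forward difference `(δ^j Q)(0)` of the degree `n` polynomial
`Q(x) = (m+n-x)(m+n-1-x)⋯(m+1-x)`: indeed `Q(k) = (m+n-k)!/(m-k)!` for `k ≤ m`, and `Q`
vanishes at `m+1, …, m+n`, so these terms may be added to the sum freely.
Differencing lowers the degree: `(δ^j Q)(0) = (-1)^j n!/(n-j)! ⋅ (m+n-j)!/m!`, which cancels
`j! b_j` for `j ≤ n` and vanishes for `j > n`. At `j = m+n+1` the forward difference still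
vanishes, but the sum over `k ≤ m` misses its term `k = m+n+1`, where `Q = (-1)^n n!`;
hence `Δ̃^{(m+n+1)}(0) = n!`.
-/

open Finset Polynomial Complex
open scoped Nat

theorem iteratedDeriv_sum_mul_pow_zero {𝕜 : Type*} [NontriviallyNormedField 𝕜]
    (s : Finset ℕ) (a : ℕ → 𝕜) (j : ℕ) :
    iteratedDeriv j (fun z => ∑ k ∈ s, a k * z ^ k) 0 = if j ∈ s then a j * j ! else 0 := by
  rw [iteratedDeriv_fun_sum fun k _ => by fun_prop]
  simp only [iteratedDeriv_const_mul_field, iteratedDeriv_fun_pow_zero, Nat.cast_ite,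
    Nat.cast_zero, mul_ite, mul_zero]
  rw [sum_ite_eq]

theorem iteratedDeriv_pow_mul_cexp_zero (c : ℂ) (k j : ℕ) :
    iteratedDeriv j (fun z => z ^ k * cexp (c * z)) 0 = j.descFactorial k * c ^ (j - k) := by
  rw [iteratedDeriv_fun_mul (by fun_prop) (by fun_prop)]
  simp only [iteratedDeriv_fun_pow_zero, iteratedDeriv_cexp_const_mul, mul_zero, exp_zero,
    mul_one, Nat.cast_ite, Nat.cast_zero, mul_ite, ite_mul, zero_mul]
  rw [sum_ite_eq', Nat.descFactorial_eq_factorial_mul_choose]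
  split_ifs with hkj
  · push_cast
    ring
  · rw [Nat.choose_eq_zero_of_lt (by simpa using hkj)]
    simp

theorem iteratedDeriv_cexp_mul_sum_zero (c : ℂ) (s : Finset ℕ) (a : ℕ → ℂ) (j : ℕ) :
    iteratedDeriv j (fun z => cexp (c * z) * ∑ k ∈ s, a k * z ^ k) 0 =
      ∑ k ∈ s, a k * j.descFactorial k * c ^ (j - k) := by
  have hterms : (fun z => cexp (c * z) * ∑ k ∈ s, a k * z ^ k) =
      fun z => ∑ k ∈ s, a k * (z ^ k * cexp (c * z)) := by
    ext z
    rw [mul_sum]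
    exact sum_congr rfl fun k _ => by ring
  rw [hterms, iteratedDeriv_fun_sum fun k _ => by fun_prop]
  simp only [iteratedDeriv_const_mul_field, iteratedDeriv_pow_mul_cexp_zero, mul_assoc]

theorem iteratedDeriv_sum_add_cexp_neg_mul_sum_zero (s t : Finset ℕ) (a c : ℕ → ℂ)
    (j : ℕ) :
    iteratedDeriv j (fun z => ∑ k ∈ s, a k * z ^ k + cexp (-z) * ∑ k ∈ t, c k * z ^ k) 0 =
      (if j ∈ s then a j * j ! else 0) +
        ∑ k ∈ t, c k * j.descFactorial k * (-1) ^ (j - k) := by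
  rw [iteratedDeriv_fun_add (by fun_prop) (by fun_prop), iteratedDeriv_sum_mul_pow_zero]
  simpa using iteratedDeriv_cexp_mul_sum_zero (-1) t c j

theorem fwdDiff_iter_apply_zero {R : Type*} [Ring R] (f : R → R) (j : ℕ) :
    (fwdDiff 1)^[j] f 0 = ∑ k ∈ range (j + 1), (-1 : R) ^ (j - k) * j.choose k * f k := by
  simp [fwdDiff_iter_eq_sum_shift, zsmul_eq_mul]

theorem fwdDiff_descPochhammer_eval_sub {R : Type*} [CommRing R] (a : R) (k : ℕ) :
    fwdDiff 1 (fun x => (descPochhammer R k).eval (a - x)) =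
      fun x => -(k : R) * (descPochhammer R (k - 1)).eval (a - 1 - x) := by
  ext x
  cases k with
  | zero => simp [fwdDiff]
  | succ k =>
    rw [fwdDiff, descPochhammer_succ_eval, descPochhammer_succ_left, eval_mul, eval_comp]
    simp only [eval_X, eval_sub, eval_one, add_tsub_cancel_right]
    rw [show a - (x + 1) = a - 1 - x by ring, show a - x - 1 = a - 1 - x by ring]
    push_cast
    ring

theorem fwdDiff_iter_descPochhammer_eval_sub {R : Type*} [CommRing R] (a : R) (k j : ℕ) :
    (fwdDiff 1)^[j] (fun x => (descPochhammer R k).eval (a - x)) =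
      fun x => (-1) ^ j * k.descFactorial j * (descPochhammer R (k - j)).eval (a - j - x) := by
  induction j with
  | zero => simp
  | succ j ih =>
    ext x
    rw [Function.iterate_succ_apply', ih]
    have hstep := congr_fun (fwdDiff_descPochhammer_eval_sub (a - j) (k - j)) x
    simp only [fwdDiff] at hstep ⊢
    rw [← mul_sub, hstep, Nat.descFactorial_succ, Nat.sub_sub, Nat.cast_succ,
      show a - (j + 1) - x = a - j - 1 - x by ring]
    rcases le_or_gt j k with hjk | hkj
    · push_cast [hjk]
      ring
    · simp [Nat.sub_eq_zero_of_le hkj.le]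

theorem sum_range_mul_descPochhammer_eval_sub (m n : ℕ) (c : ℕ → ℤ) :
    ∑ k ∈ range (m + n + 1), c k * (descPochhammer ℤ n).eval ((m + n : ℤ) - k) =
      ∑ k ∈ range (m + 1), c k * (m + n - k).descFactorial n := by
  have hcast : ∀ k ∈ range (m + n + 1),
      (descPochhammer ℤ n).eval ((m + n : ℤ) - k) = (m + n - k).descFactorial n := by
    intro k hk
    rw [← descPochhammer_eval_eq_descFactorial,
      Nat.cast_sub (by simpa [Nat.lt_succ_iff] using hk)]
    push_cast
    rfl
  rw [sum_congr rfl fun k hk => by rw [hcast k hk]]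
  refine (sum_subset (range_subset_range.2 (by omega)) fun k hk hkm => ?_).symm
  simp only [mem_range] at hk hkm
  rw [Nat.descFactorial_eq_zero_iff_lt.2 (by omega), Nat.cast_zero, mul_zero]

theorem sum_range_choose_mul_descFactorial_of_le (m n j : ℕ) (hj : j ≤ m + n) :
    ∑ k ∈ range (m + 1), (-1 : ℤ) ^ (j - k) * j.choose k * (m + n - k).descFactorial n =
      (-1) ^ j * n.descFactorial j * (m + n - j).descFactorial (n - j) := by
  have hdiff := congr_fun (fwdDiff_iter_descPochhammer_eval_sub ((m + n : ℕ) : ℤ) n j) 0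
  rw [fwdDiff_iter_apply_zero, ← Nat.cast_sub hj, sub_zero,
    descPochhammer_eval_eq_descFactorial] at hdiff
  rw [← hdiff, ← sum_range_mul_descPochhammer_eval_sub]
  refine (sum_subset (range_subset_range.2 (by omega)) fun k _ hkj => ?_).symm
  rw [Nat.choose_eq_zero_of_lt (by simpa using hkj)]
  simp

theorem sum_range_choose_mul_descFactorial_succ (m n : ℕ) :
    ∑ k ∈ range (m + 1),
        (-1 : ℤ) ^ (m + n + 1 - k) * (m + n + 1).choose k * (m + n - k).descFactorial n =
      -((-1) ^ n * n !) := by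
  have hdiff := congr_fun (fwdDiff_iter_descPochhammer_eval_sub ((m + n : ℕ) : ℤ) n (m + n + 1)) 0
  rw [fwdDiff_iter_apply_zero, sum_range_succ,
    Nat.descFactorial_eq_zero_iff_lt.2 (by omega)] at hdiff
  rw [← sum_range_mul_descPochhammer_eval_sub, eq_neg_iff_add_eq_zero]
  have hlast : (descPochhammer ℤ n).eval (-1) = (-1) ^ n * n ! := by
    rw [descPochhammer_eval_eq_prod_range, ← Finset.prod_range_add_one_eq_factorial]
    push_cast
    simp_rw [show ∀ i : ℕ, (-1 : ℤ) - i = -(i + 1) from fun i => by ring, prod_neg,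
      card_range]
  push_cast at hdiff
  simpa [hlast] using hdiff

theorem factorial_div_mul_descFactorial {K : Type*} [Field K] [CharZero K] {m k : ℕ}
    (hk : k ≤ m) (n j : ℕ) :
    ((m + n - k)! : K) / (k ! * (m - k)!) * j.descFactorial k =
      j.choose k * (m + n - k).descFactorial n := by
  rw [Nat.descFactorial_eq_factorial_mul_choose j k,
    ← Nat.factorial_mul_descFactorial (show n ≤ m + n - k by omega),
    show m + n - k - n = m - k by omega]
  have hk! : (k ! : K) ≠ 0 := Nat.cast_ne_zero.2 (Nat.factorial_ne_zero k)
  have hmk! : ((m - k)! : K) ≠ 0 := Nat.cast_ne_zero.2 (Nat.factorial_ne_zero (m - k))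
  push_cast
  field_simp

theorem sum_range_mul_factorial_div_mul_descFactorial (m n j : ℕ) (x : ℂ) :
    ∑ k ∈ range (m + 1),
        x * (m + n - k)! / (k ! * (m - k)!) * j.descFactorial k * (-1) ^ (j - k) =
      x * ((∑ k ∈ range (m + 1),
        (-1 : ℤ) ^ (j - k) * j.choose k * (m + n - k).descFactorial n : ℤ) : ℂ) := by
  push_cast
  rw [mul_sum]
  refine sum_congr rfl fun k hk => ?_
  have hkm := factorial_div_mul_descFactorial (K := ℂ) (Nat.lt_succ_iff.1 (mem_range.1 hk)) n j
  linear_combination (x * (-1) ^ (j - k)) * hkm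

theorem descFactorial_mul_descFactorial_sub {n j : ℕ} (hj : j ≤ n) (m : ℕ) :
    n.descFactorial j * (m + n - j).descFactorial (n - j) = n ! * (m + n - j).choose m := by
  rw [Nat.descFactorial_eq_factorial_mul_choose (m + n - j), ← mul_assoc,
    mul_comm (n.descFactorial j), Nat.factorial_mul_descFactorial hj,
    Nat.choose_symm_of_eq_add (show m + n - j = n - j + m by omega)]

theorem stmt_6_general (n m : ℕ) (hn : 1 ≤ n)
    (b : ℕ → ℂ) (β : ℕ → ℂ)
    (hb : ∀ k, b k = (-1 : ℂ) ^ (n - k) * ((n.factorial : ℂ) / (k.factorial : ℂ)) *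
      ((m + n - k).choose m : ℂ))
    (hβ : ∀ k, β k = (-1 : ℂ) ^ (n - 1) * ((m + n - k).factorial : ℂ) /
      ((k.factorial : ℂ) * ((m - k).factorial : ℂ)))
    (Δ : ℂ → ℂ)
    (hΔ : ∀ z, Δ z = z ^ n + (∑ k ∈ Finset.range n, b k * z ^ k)
      + Complex.exp (-z) * ∑ k ∈ Finset.range (m + 1), β k * z ^ k) :
    (∀ j : ℕ, j ≤ m + n → iteratedDeriv j Δ 0 = 0) ∧
      iteratedDeriv (m + n + 1) Δ 0 ≠ 0 := by
  have hbn : b n = 1 := by simp [hb, Nat.factorial_ne_zero]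
  have hderiv : ∀ j, iteratedDeriv j Δ 0 = (if j ≤ n then b j * j ! else 0) +
      (-1) ^ (n - 1) * ((∑ k ∈ range (m + 1),
        (-1 : ℤ) ^ (j - k) * j.choose k * (m + n - k).descFactorial n : ℤ) : ℂ) := by
    intro j
    have hΔ' : Δ = fun z => ∑ k ∈ range (n + 1), b k * z ^ k +
        cexp (-z) * ∑ k ∈ range (m + 1), β k * z ^ k := by
      ext z
      rw [hΔ, sum_range_succ (fun k => b k * z ^ k), hbn]
      ring
    rw [hΔ', iteratedDeriv_sum_add_cexp_neg_mul_sum_zero]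
    simp only [mem_range, Nat.lt_succ_iff, hβ, sum_range_mul_factorial_div_mul_descFactorial]
  constructor
  · intro j hj
    rw [hderiv, sum_range_choose_mul_descFactorial_of_le m n j hj]
    rcases le_or_gt j n with hjn | hjn
    · have hsign : (-1 : ℂ) ^ (n - 1) * (-1) ^ j = (-1) ^ (n - j + 1) := by
        rw [← pow_add]
        exact neg_one_pow_congr (by simp only [Nat.even_iff]; omega)
      have hj! : (j ! : ℂ) ≠ 0 := Nat.cast_ne_zero.2 (Nat.factorial_ne_zero j)
      rw [if_pos hjn, hb j, mul_assoc _ (n.descFactorial j : ℤ),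
        ← Nat.cast_mul, descFactorial_mul_descFactorial_sub hjn]
      push_cast
      field_simp
      linear_combination (n ! * ((m + n - j).choose m : ℂ)) * hsign
    · rw [if_neg hjn.not_ge, Nat.descFactorial_eq_zero_iff_lt.2 hjn]
      simp
  · rw [hderiv, if_neg (by omega), sum_range_choose_mul_descFactorial_succ]
    push_cast
    simp [Nat.factorial_ne_zero]

theorem stmt_6 (n m : ℕ) (hn : 1 ≤ n) (hm : m ≤ n)
    (b : ℕ → ℂ) (β : ℕ → ℂ)
    (hb : ∀ k, b k = (-1 : ℂ) ^ (n - k) * ((n.factorial : ℂ) / (k.factorial : ℂ)) *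
      ((m + n - k).choose m : ℂ))
    (hβ : ∀ k, β k = (-1 : ℂ) ^ (n - 1) * ((m + n - k).factorial : ℂ) /
      ((k.factorial : ℂ) * ((m - k).factorial : ℂ)))
    (Δ : ℂ → ℂ)
    (hΔ : ∀ z, Δ z = z ^ n + (∑ k ∈ Finset.range n, b k * z ^ k)
      + Complex.exp (-z) * ∑ k ∈ Finset.range (m + 1), β k * z ^ k) :
    (∀ j : ℕ, j ≤ m + n → iteratedDeriv j Δ 0 = 0) ∧
      iteratedDeriv (m + n + 1) Δ 0 ≠ 0 :=
  stmt_6_general n m hn b β hb hβ Δ hΔ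
end

section
/- Let m ∈ ℕ, n ∈ ℕ with n ≥ 1, and let T be the (m+1)×(m+1) real matrix with entries T_{j,k} = (-1)^{n+j-k}/(n+j-k)! for 0 ≤ j,k ≤ m (where 1/(n+j-k)! is interpreted as 0 if n+j-k < 0). Then T is invertible, and det T = (-1)^{n(m+1)} · (∏_{k=0}^{m} k!) / (∏_{k=0}^{m} (n+k)!). -/
open Finset Matrix Nat

/-! With `N = n + j`, `(-1)^(N-k)/(N-k)! = (-1)^N/N! · N(N-1)⋯(N-k+1) · (-1)^k`, which also
holds (as `0 = 0`) for `k > N`, so `T = diag((-1)^(n+j)/(n+j)!) · P · diag((-1)^k)` with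
`P j k = (n+j)(n+j-1)⋯(n+j-k+1)`. Column `k` of `P` evaluates a monic polynomial of degree `k`
at the points `n, n+1, …, n+m`, so `det P` is their Vandermonde determinant `∏ k!`. -/

theorem Matrix.det_descFactorial_add_eq_superFactorial
    (R : Type*) [CommRing R] [IsDomain R] (N c : ℕ) :
    (of fun j k : Fin (N + 1) => ((c + j).descFactorial k : R)).det = sf N := by
  have h := det_eval_matrixOfPolynomials_eq_det_vandermonde (fun j : Fin (N + 1) => (j : R) + c)
    (fun k => descPochhammer R k) (descPochhammer_natDegree R ·) (monic_descPochhammer R ·)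
  rw [det_vandermonde_add, det_vandermonde_id_eq_superFactorial] at h
  rw [h]
  congr with j k
  rw [← descPochhammer_eval_eq_descFactorial, Nat.cast_add, add_comm]

theorem ite_neg_one_pow_sub_div_factorial {K : Type*} [Field K] [CharZero K] (N k : ℕ) :
    (if k ≤ N then (-1 : K) ^ (N - k) / (N - k)! else 0) =
      (-1) ^ N / N ! * ((N.descFactorial k : K) * (-1) ^ k) := by
  split_ifs with hk
  · obtain ⟨d, rfl⟩ := Nat.exists_eq_add_of_le hk
    have hD : ((k + d).descFactorial k : K) ≠ 0 := by
      exact_mod_cast (Nat.descFactorial_pos.mpr hk).ne'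
    rw [← factorial_mul_descFactorial hk, Nat.add_sub_cancel_left]
    push_cast
    field_simp
    rw [add_comm k d, pow_add, mul_assoc, ← mul_pow, neg_one_mul, neg_neg, one_pow, mul_one]
  · simp [descFactorial_eq_zero_iff_lt.mpr (not_le.mp hk)]

theorem stmt_8_general (m n : ℕ)
    (T : Matrix (Fin (m + 1)) (Fin (m + 1)) ℝ)
    (hT : ∀ j k : Fin (m + 1),
      T j k = if (k : ℕ) ≤ n + (j : ℕ) then
          (-1 : ℝ) ^ (n + (j : ℕ) - (k : ℕ)) / ((n + (j : ℕ) - (k : ℕ)).factorial : ℝ)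
        else 0) :
    IsUnit T.det ∧
      T.det = (-1 : ℝ) ^ (n * (m + 1)) *
        ((∏ k ∈ Finset.range (m + 1), (k.factorial : ℝ)) /
          (∏ k ∈ Finset.range (m + 1), ((n + k).factorial : ℝ))) := by
  have hfactor : T = diagonal (fun j : Fin (m + 1) => (-1 : ℝ) ^ (n + j) / (n + j)!) *
      of (fun j k : Fin (m + 1) => ((n + j).descFactorial k : ℝ)) *
      diagonal (fun k : Fin (m + 1) => (-1) ^ (k : ℕ)) := by
    ext j k
    rw [mul_diagonal, diagonal_mul, of_apply, hT, ite_neg_one_pow_sub_div_factorial, mul_assoc]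
  have hsign : (∏ j : Fin (m + 1), (-1 : ℝ) ^ (n + j)) *
      ∏ k : Fin (m + 1), (-1 : ℝ) ^ (k : ℕ) = (-1) ^ (n * (m + 1)) := by
    rw [← prod_mul_distrib]
    simp [pow_add, mul_assoc, ← mul_pow, pow_mul]
  have hdet : T.det = (-1 : ℝ) ^ (n * (m + 1)) *
      ((∏ k ∈ range (m + 1), (k ! : ℝ)) / ∏ k ∈ range (m + 1), ((n + k)! : ℝ)) := by
    rw [hfactor, det_mul, det_mul, det_diagonal, det_diagonal,
      det_descFactorial_add_eq_superFactorial, prod_div_distrib, ← hsign,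
      ← Fin.prod_univ_eq_prod_range (fun k => ((n + k)! : ℝ)),
      ← prod_range_succ_factorial]
    push_cast
    ring
  refine ⟨isUnit_iff_ne_zero.mpr ?_, hdet⟩
  rw [hdet]
  simp [prod_ne_zero_iff, factorial_ne_zero]

theorem stmt_8 (m n : ℕ) (hn : 1 ≤ n)
    (T : Matrix (Fin (m + 1)) (Fin (m + 1)) ℝ)
    (hT : ∀ j k : Fin (m + 1),
      T j k = if (k : ℕ) ≤ n + (j : ℕ) then
          (-1 : ℝ) ^ (n + (j : ℕ) - (k : ℕ)) / ((n + (j : ℕ) - (k : ℕ)).factorial : ℝ)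
        else 0) :
    IsUnit T.det ∧
      T.det = (-1 : ℝ) ^ (n * (m + 1)) *
        ((∏ k ∈ Finset.range (m + 1), (k.factorial : ℝ)) /
          (∏ k ∈ Finset.range (m + 1), ((n + k).factorial : ℝ))) :=
  stmt_8_general m n T hT
end

section
/- Let m, n ∈ ℕ with n ≥ 1. Define (m+1)×(m+1) matrices B, L, U by B_{j,k} = (-1)^{n+j-k} C(n+j, k), L_{j,k} = (-1)^{j-k} C(j,k), and U_{j,k} = (-1)^{n+j-k} C(n, k-j), for 0 ≤ j,k ≤ m, where C is the binomial coefficient (equal to 0 when the lower index is negative or exceeds the upper index). Then B = L·U. In particular, since L is lower triangular with diagonal entries 1 and U is upper triangular with diagonal entries (-1)^n, one has det B = (-1)^{n(m+1)}. -/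
/-!
Entrywise, `(L * U) j k` is a sum over `i ≤ k` of `(-1)^(j-i) C(j,i) · (-1)^(n+i-k) C(n,k-i)`.
Whenever a term is nonzero we have `i ≤ j` and `k - i ≤ n`, so the two signs combine to
`(-1)^(n+j-k)`, and the remaining sum is Vandermonde's identity `∑ C(j,i) C(n,k-i) = C(n+j,k)`.
The determinant is then the product of the diagonals of the two triangular factors.
-/

open Finset

lemma Fin.sum_ite_val_le_eq_sum_range {M : Type*} [AddCommMonoid M] {N k : ℕ} (hk : k < N)
    (f : ℕ → M) :
    ∑ i : Fin N, (if (i : ℕ) ≤ k then f i else 0) = ∑ i ∈ range (k + 1), f i := by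
  rw [Fin.sum_univ_eq_sum_range (fun i => if i ≤ k then f i else 0), ← sum_filter]
  congr 1
  ext i
  simp only [mem_filter, mem_range]
  omega

lemma Nat.sum_range_choose_mul_choose_sub (j n k : ℕ) :
    ∑ i ∈ range (k + 1), j.choose i * n.choose (k - i) = (n + j).choose k := by
  rw [add_comm n j, Nat.add_choose_eq, Nat.sum_antidiagonal_eq_sum_range_succ_mk]

lemma neg_one_pow_mul_choose_mul_neg_one_pow_mul_choose {R : Type*} [CommRing R]
    {j i k : ℕ} (n : ℕ) (hik : i ≤ k) :
    (-1 : R) ^ (j - i) * j.choose i * ((-1) ^ (n + i - k) * n.choose (k - i)) =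
      (-1) ^ (n + j - k) * ((j.choose i * n.choose (k - i) : ℕ) : R) := by
  rcases lt_or_ge j i with hji | hij
  · simp [Nat.choose_eq_zero_of_lt hji]
  rcases lt_or_ge n (k - i) with hn | hn
  · simp [Nat.choose_eq_zero_of_lt hn]
  rw [show n + j - k = (j - i) + (n + i - k) by omega, pow_add]
  push_cast
  ring

lemma sum_signed_choose_mul_signed_choose {R : Type*} [CommRing R] {N : ℕ} (n : ℕ)
    (j k : Fin N) :
    ∑ i : Fin N, (-1 : R) ^ ((j : ℕ) - i) * (j : ℕ).choose i *
        (if (i : ℕ) ≤ k then (-1 : R) ^ (n + i - k) * n.choose ((k : ℕ) - i) else 0) =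
      (-1 : R) ^ (n + (j : ℕ) - k) * (n + (j : ℕ)).choose k := by
  simp only [mul_ite, mul_zero]
  rw [Fin.sum_ite_val_le_eq_sum_range k.isLt
    (fun i => (-1 : R) ^ ((j : ℕ) - i) * (j : ℕ).choose i *
      ((-1) ^ (n + i - k) * n.choose ((k : ℕ) - i)))]
  rw [sum_congr rfl fun i hi => neg_one_pow_mul_choose_mul_neg_one_pow_mul_choose n
    (Nat.lt_succ_iff.mp (mem_range.mp hi)), ← mul_sum, ← Nat.cast_sum,
    Nat.sum_range_choose_mul_choose_sub]

lemma det_eq_one_of_signed_pascal {R : Type*} [CommRing R] {N : ℕ}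
    (L : Matrix (Fin N) (Fin N) R)
    (hL : ∀ j k : Fin N, L j k = (-1 : R) ^ ((j : ℕ) - k) * (j : ℕ).choose k) :
    L.det = 1 := by
  have hlower : L.IsLowerTriangular := fun j k hjk => by
    rw [hL, Nat.choose_eq_zero_of_lt (show (j : ℕ) < k from hjk), Nat.cast_zero, mul_zero]
  rw [Matrix.det_of_isLowerTriangular L hlower]
  simp [hL]

lemma det_eq_neg_one_pow_of_signed_binomial_upper {R : Type*} [CommRing R] {N : ℕ} (n : ℕ)
    (U : Matrix (Fin N) (Fin N) R)
    (hU : ∀ j k : Fin N, U j k = if (j : ℕ) ≤ k then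
      (-1 : R) ^ (n + (j : ℕ) - k) * n.choose ((k : ℕ) - j) else 0) :
    U.det = (-1) ^ (n * N) := by
  have hupper : U.IsUpperTriangular := fun j k hkj => by
    rw [hU, if_neg (not_le.mpr (show (k : ℕ) < j from hkj))]
  rw [Matrix.det_of_isUpperTriangular hupper]
  simp [hU, pow_mul]

theorem stmt_9_general (m n : ℕ)
    (B L U : Matrix (Fin (m + 1)) (Fin (m + 1)) ℤ)
    (hB : ∀ j k : Fin (m + 1),
      B j k = (-1 : ℤ) ^ (n + (j : ℕ) - (k : ℕ)) * ((n + (j : ℕ)).choose (k : ℕ)))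
    (hL : ∀ j k : Fin (m + 1),
      L j k = (-1 : ℤ) ^ ((j : ℕ) - (k : ℕ)) * ((j : ℕ).choose (k : ℕ)))
    (hU : ∀ j k : Fin (m + 1),
      U j k = if (j : ℕ) ≤ (k : ℕ) then
          (-1 : ℤ) ^ (n + (j : ℕ) - (k : ℕ)) * (n.choose ((k : ℕ) - (j : ℕ)))
        else 0) :
    B = L * U ∧ B.det = (-1 : ℤ) ^ (n * (m + 1)) := by
  have hBLU : B = L * U := by
    ext j k
    simp only [Matrix.mul_apply, hB, hL, hU]
    exact (sum_signed_choose_mul_signed_choose n j k).symm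
  refine ⟨hBLU, ?_⟩
  rw [hBLU, Matrix.det_mul, det_eq_one_of_signed_pascal L hL,
    det_eq_neg_one_pow_of_signed_binomial_upper n U hU, one_mul]

theorem stmt_9 (m n : ℕ) (hn : 1 ≤ n)
    (B L U : Matrix (Fin (m + 1)) (Fin (m + 1)) ℤ)
    (hB : ∀ j k : Fin (m + 1),
      B j k = (-1 : ℤ) ^ (n + (j : ℕ) - (k : ℕ)) * ((n + (j : ℕ)).choose (k : ℕ)))
    (hL : ∀ j k : Fin (m + 1),
      L j k = (-1 : ℤ) ^ ((j : ℕ) - (k : ℕ)) * ((j : ℕ).choose (k : ℕ)))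
    (hU : ∀ j k : Fin (m + 1),
      U j k = if (j : ℕ) ≤ (k : ℕ) then
          (-1 : ℤ) ^ (n + (j : ℕ) - (k : ℕ)) * (n.choose ((k : ℕ) - (j : ℕ)))
        else 0) :
    B = L * U ∧ B.det = (-1 : ℤ) ^ (n * (m + 1)) :=
  stmt_9_general m n B L U hB hL hU
end

section
/- Let s₀ = ξ + iω with ξ > 0 and suppose (s₀² - 4s₀ + 6)e^{s₀} = 2s₀ + 6. Then H_ξ(ω²) < 0, where H_ξ(Ω) = (1+2ξ)Ω² + 2(2ξ-7)ξ²Ω + (2ξ³ - 15ξ² + 48ξ - 72)ξ². -/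
/-!
Taking squared moduli in `(s₀² - 4s₀ + 6) e^{s₀} = 2s₀ + 6` gives
`|s₀² - 4s₀ + 6|² e^{2ξ} = |2s₀ + 6|²`. The left factor is nonzero (otherwise `s₀ = -3`), so
`e^{2ξ} > 1 + 2ξ` turns this into `|s₀² - 4s₀ + 6|² (1 + 2ξ) - |2s₀ + 6|² < 0`, and that difference is
exactly `H_ξ(ω²)`.
-/

open Complex

lemma Complex.normSq_exp (z : ℂ) : normSq (exp z) = Real.exp (2 * z.re) := by
  rw [normSq_eq_norm_sq, norm_exp, sq, ← Real.exp_add, two_mul]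

lemma Complex.normSq_mul_one_add_two_mul_re_lt {p q z : ℂ} (hz : 0 < z.re) (hp : p ≠ 0)
    (h : p * exp z = q) : normSq p * (1 + 2 * z.re) < normSq q :=
  calc normSq p * (1 + 2 * z.re)
      < normSq p * Real.exp (2 * z.re) := by
        gcongr
        · exact normSq_pos.mpr hp
        · linarith [Real.add_one_lt_exp (x := 2 * z.re) (by positivity)]
    _ = normSq q := by rw [← h, normSq_mul, normSq_exp]

lemma sq_sub_four_mul_add_six_ne_zero {s : ℂ} (hs : 0 < s.re)
    (h : (s ^ 2 - 4 * s + 6) * exp s = 2 * s + 6) : s ^ 2 - 4 * s + 6 ≠ 0 := by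
  intro h₀
  rw [h₀, zero_mul] at h
  have : s = -3 := by linear_combination -h / 2
  rw [this] at hs
  norm_num at hs

def H (ξ Ω : ℝ) : ℝ :=
  (1 + 2 * ξ) * Ω ^ 2 + 2 * (2 * ξ - 7) * ξ ^ 2 * Ω + (2 * ξ ^ 3 - 15 * ξ ^ 2 + 48 * ξ - 72) * ξ ^ 2

lemma normSq_mul_one_add_two_mul_re_sub_normSq (s : ℂ) :
    normSq (s ^ 2 - 4 * s + 6) * (1 + 2 * s.re) - normSq (2 * s + 6) = H s.re (s.im ^ 2) := by
  simp only [normSq_apply, H, pow_two, add_re, add_im, sub_re, sub_im, mul_re, mul_im,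
    re_ofNat, im_ofNat]
  ring

lemma H_re_im_sq_neg {s : ℂ} (hs : 0 < s.re) (h : (s ^ 2 - 4 * s + 6) * exp s = 2 * s + 6) :
    H s.re (s.im ^ 2) < 0 := by
  have hlt := normSq_mul_one_add_two_mul_re_lt hs (sq_sub_four_mul_add_six_ne_zero hs h) h
  linarith [normSq_mul_one_add_two_mul_re_sub_normSq s]

theorem stmt_13 (ξ ω : ℝ) (hξ : 0 < ξ) (s₀ : ℂ)
    (hs₀ : s₀ = (ξ : ℂ) + Complex.I * ω)
    (heq : (s₀ ^ 2 - 4 * s₀ + 6) * Complex.exp s₀ = 2 * s₀ + 6) :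
    (1 + 2 * ξ) * (ω ^ 2) ^ 2 + 2 * (2 * ξ - 7) * ξ ^ 2 * ω ^ 2 +
        (2 * ξ ^ 3 - 15 * ξ ^ 2 + 48 * ξ - 72) * ξ ^ 2 < 0 := by
  have hre : s₀.re = ξ := by simp [hs₀]
  have him : s₀.im = ω := by simp [hs₀]
  have hH := H_re_im_sq_neg (hre ▸ hξ) heq
  rwa [hre, him] at hH
end

section
/- For every ξ ∈ (0, 3(1+√2)/2), the real number Ω₊ = ξ(7ξ - 2ξ² + 2√(-8ξ² + 24ξ + 18))/(1 + 2ξ) satisfies Ω₊ ≤ ξ(-2ξ² + 7ξ + 12)/(1 + 2ξ) < π². -/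
/-
The radicand is `36 - 2 (2ξ - 3)²`, so the square root is at most `6`; this gives the first
inequality. For the second, `ξ (-2ξ² + 7ξ + 12) = (8 - (ξ - 2)²)(1 + 2ξ) - 4`, so the quotient is
below `8 < π²`.
-/

open Real

lemma sqrt_neg_eight_mul_sq_add_le_six (x : ℝ) : √(-8 * x ^ 2 + 24 * x + 18) ≤ 6 := by
  rw [sqrt_le_left (by norm_num)]
  nlinarith [sq_nonneg (2 * x - 3)]

lemma cubic_div_lt_eight {x : ℝ} (hx : 0 < 1 + 2 * x) :
    x * (-2 * x ^ 2 + 7 * x + 12) / (1 + 2 * x) < 8 := by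
  rw [div_lt_iff₀ hx]
  nlinarith [mul_nonneg (sq_nonneg (x - 2)) hx.le]

lemma eight_lt_pi_sq : 8 < π ^ 2 := by
  nlinarith [pi_gt_three]

theorem stmt_14_general (ξ : ℝ) (h0 : 0 < ξ) :
    ξ * (7 * ξ - 2 * ξ ^ 2 + 2 * Real.sqrt (-8 * ξ ^ 2 + 24 * ξ + 18)) / (1 + 2 * ξ) ≤
        ξ * (-2 * ξ ^ 2 + 7 * ξ + 12) / (1 + 2 * ξ) ∧
      ξ * (-2 * ξ ^ 2 + 7 * ξ + 12) / (1 + 2 * ξ) < Real.pi ^ 2 := by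
  have hden : 0 < 1 + 2 * ξ := by linarith
  refine ⟨?_, (cubic_div_lt_eight hden).trans eight_lt_pi_sq⟩
  gcongr ξ * ?_ / _
  have := sqrt_neg_eight_mul_sq_add_le_six ξ
  linarith

theorem stmt_14 (ξ : ℝ) (h0 : 0 < ξ) (h1 : ξ < 3 * (1 + Real.sqrt 2) / 2) :
    ξ * (7 * ξ - 2 * ξ ^ 2 + 2 * Real.sqrt (-8 * ξ ^ 2 + 24 * ξ + 18)) / (1 + 2 * ξ) ≤
        ξ * (-2 * ξ ^ 2 + 7 * ξ + 12) / (1 + 2 * ξ) ∧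
      ξ * (-2 * ξ ^ 2 + 7 * ξ + 12) / (1 + 2 * ξ) < Real.pi ^ 2 :=
  stmt_14_general ξ h0
end

section
/- Let n ∈ ℕ, n ≥ 1, and define Δ̃(z) = ∑_{k=0}^{n} (-1)^{n-k} ((2n-k)!/(k!(n-k)!)) z^k + e^{-z} ∑_{k=0}^{n} (-1)^{n-1} ((2n-k)!/(k!(n-k)!)) z^k. Then for ζ ∈ ℝ, Δ̃(iζ) = 0 if and only if sin(ζ/2) ∑_{ℓ=0}^{⌊n/2⌋} (-1)^ℓ ((2n-2ℓ)!/((2ℓ)!(n-2ℓ)!)) ζ^{2ℓ} = ζ cos(ζ/2) ∑_{ℓ=0}^{⌊(n-1)/2⌋} (-1)^ℓ ((2n-2ℓ-1)!/((2ℓ+1)!(n-2ℓ-1)!)) ζ^{2ℓ}. -/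
/-!
Write `Q(z) = ∑ₖ (2n-k)!/(k!(n-k)!) zᵏ`, so that `Δ̃(z) = (-1)ⁿ (Q(-z) - e^{-z} Q(z))`. On the
imaginary axis `Q(-iζ)` is the conjugate of `w = Q(iζ) = A + iζB`, with `A` and `B` the even and
odd parts appearing on the right. Hence `Δ̃(iζ) = 0` says `w̄ = e^{-iζ} w`, i.e. that
`e^{-iζ/2} w` is real, and the imaginary part of `e^{-iζ/2} (A + iζB)` is `ζ cos(ζ/2) B - sin(ζ/2) A`.
-/

open Finset Complex ComplexConjugate

lemma Finset.sum_range_eq_add_even_odd {M : Type*} [AddCommMonoid M] (f : ℕ → M) (m : ℕ) :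
    ∑ k ∈ range m, f k =
      ∑ ℓ ∈ range ((m + 1) / 2), f (2 * ℓ) + ∑ ℓ ∈ range (m / 2), f (2 * ℓ + 1) := by
  induction m with
  | zero => simp
  | succ m ih =>
    rw [sum_range_succ, ih]
    obtain ⟨t, rfl | rfl⟩ := Nat.even_or_odd' m
    · rw [show (2 * t + 1) / 2 = t by omega, show (2 * t + 1 + 1) / 2 = t + 1 by omega,
        show 2 * t / 2 = t by omega, sum_range_succ]
      abel
    · rw [show (2 * t + 1 + 1) / 2 = t + 1 by omega, show (2 * t + 1 + 1 + 1) / 2 = t + 1 by omega,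
        show (2 * t + 1) / 2 = t by omega, sum_range_succ (fun ℓ ↦ f (2 * ℓ + 1))]
      abel

lemma sum_ofReal_mul_I_mul_pow (a : ℕ → ℝ) (m : ℕ) (ζ : ℝ) :
    ∑ k ∈ range m, (a k : ℂ) * (I * ζ) ^ k =
      (∑ ℓ ∈ range ((m + 1) / 2), (-1) ^ ℓ * a (2 * ℓ) * ζ ^ (2 * ℓ) : ℝ) +
        I * ζ * (∑ ℓ ∈ range (m / 2), (-1) ^ ℓ * a (2 * ℓ + 1) * ζ ^ (2 * ℓ) : ℝ) := by
  have hsq (ℓ : ℕ) : (I * ζ) ^ (2 * ℓ) = (-1) ^ ℓ * (ζ : ℂ) ^ (2 * ℓ) := by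
    rw [pow_mul, mul_pow, I_sq, pow_mul, neg_one_mul, neg_pow]
  rw [sum_range_eq_add_even_odd]
  push_cast
  rw [mul_sum]
  congr 1 <;> refine sum_congr rfl fun ℓ _ ↦ ?_
  · rw [hsq]; ring
  · rw [pow_succ, hsq]; ring

lemma conj_eq_exp_neg_I_mul_mul_iff (w : ℂ) (θ : ℝ) :
    conj w = exp (-(I * θ)) * w ↔ (exp (-(I * θ) / 2) * w).im = 0 := by
  have hconj : conj (exp (-(I * θ) / 2) * w) = exp (I * θ / 2) * conj w := by
    rw [map_mul, ← exp_conj]; simp [map_ofNat]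
  rw [← conj_eq_iff_im, hconj, ← mul_right_inj' (exp_ne_zero (I * θ / 2)), ← mul_assoc, ← exp_add,
    show I * θ / 2 + -(I * θ) = -(I * θ) / 2 by ring]

lemma im_exp_neg_I_mul_div_two_mul (ζ A B : ℝ) :
    (exp (-(I * ζ) / 2) * (A + I * ζ * B)).im =
      ζ * Real.cos (ζ / 2) * B - Real.sin (ζ / 2) * A := by
  rw [show -(I * ζ) / 2 = (-(ζ / 2) : ℝ) * I by push_cast; ring, exp_mul_I, ← ofReal_cos,
    ← ofReal_sin]
  simp [-ofReal_cos, -ofReal_sin]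
  ring

noncomputable def padeCoeff (n k : ℕ) : ℝ :=
  (2 * n - k).factorial / (k.factorial * (n - k).factorial)

/-- Up to the factor `n! / (2n)!`, the numerator of the `[n/n]` Padé approximant of `exp`. -/
noncomputable def padePoly (n : ℕ) (z : ℂ) : ℂ := ∑ k ∈ range (n + 1), (padeCoeff n k : ℂ) * z ^ k

lemma padePoly_conj (n : ℕ) (z : ℂ) : padePoly n (conj z) = conj (padePoly n z) := by
  simp [padePoly, map_sum]

lemma neg_one_pow_sub_mul_pow {R : Type*} [Ring R] {n k : ℕ} (hk : k ≤ n) (z : R) :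
    (-1) ^ (n - k) * z ^ k = (-1) ^ n * (-z) ^ k := by
  obtain ⟨j, rfl⟩ := Nat.exists_eq_add_of_le hk
  rw [Nat.add_sub_cancel_left, neg_pow z, ← mul_assoc, ← pow_add, add_right_comm, ← two_mul,
    pow_add, pow_mul, neg_one_sq, one_pow, one_mul]

lemma sum_add_exp_neg_mul_sum_eq_padePoly (n : ℕ) (hn : 1 ≤ n) (z : ℂ) :
    (∑ k ∈ Finset.range (n + 1),
        (-1 : ℂ) ^ (n - k) * (((2 * n - k).factorial : ℂ) /
          ((k.factorial : ℂ) * ((n - k).factorial : ℂ))) * z ^ k)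
      + Complex.exp (-z) *
        ∑ k ∈ Finset.range (n + 1),
          (-1 : ℂ) ^ (n - 1) * (((2 * n - k).factorial : ℂ) /
            ((k.factorial : ℂ) * ((n - k).factorial : ℂ))) * z ^ k =
      (-1) ^ n * (padePoly n (-z) - exp (-z) * padePoly n z) := by
  have hsign : (-1 : ℂ) ^ (n - 1) = -(-1) ^ n := by
    simpa using neg_one_pow_sub_mul_pow hn (1 : ℂ)
  simp only [padePoly, padeCoeff, hsign]
  push_cast
  rw [mul_sub, sub_eq_add_neg]
  congr 1
  · rw [mul_sum]
    refine sum_congr rfl fun k hk ↦ ?_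
    rw [mul_right_comm, neg_one_pow_sub_mul_pow (Nat.lt_succ_iff.mp (mem_range.mp hk))]
    ring
  · simp only [mul_sum, ← sum_neg_distrib]
    exact sum_congr rfl fun k _ ↦ by ring

theorem stmt_16 (n : ℕ) (hn : 1 ≤ n) (Δ : ℂ → ℂ)
    (hΔ : ∀ z : ℂ, Δ z =
      (∑ k ∈ Finset.range (n + 1),
        (-1 : ℂ) ^ (n - k) * (((2 * n - k).factorial : ℂ) /
          ((k.factorial : ℂ) * ((n - k).factorial : ℂ))) * z ^ k)
      + Complex.exp (-z) *
        ∑ k ∈ Finset.range (n + 1),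
          (-1 : ℂ) ^ (n - 1) * (((2 * n - k).factorial : ℂ) /
            ((k.factorial : ℂ) * ((n - k).factorial : ℂ))) * z ^ k)
    (ζ : ℝ) :
    Δ (Complex.I * ζ) = 0 ↔
      Real.sin (ζ / 2) *
          ∑ ℓ ∈ Finset.range (n / 2 + 1),
            (-1 : ℝ) ^ ℓ * (((2 * n - 2 * ℓ).factorial : ℝ) /
              (((2 * ℓ).factorial : ℝ) * ((n - 2 * ℓ).factorial : ℝ))) * ζ ^ (2 * ℓ) =
        ζ * Real.cos (ζ / 2) *
          ∑ ℓ ∈ Finset.range ((n - 1) / 2 + 1),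
            (-1 : ℝ) ^ ℓ * (((2 * n - 2 * ℓ - 1).factorial : ℝ) /
              (((2 * ℓ + 1).factorial : ℝ) * ((n - 2 * ℓ - 1).factorial : ℝ))) * ζ ^ (2 * ℓ) := by
  have hconj : padePoly n (-(I * ζ)) = conj (padePoly n (I * ζ)) := by
    rw [← padePoly_conj]; simp
  rw [hΔ, sum_add_exp_neg_mul_sum_eq_padePoly n hn, hconj, mul_eq_zero,
    or_iff_right (pow_ne_zero _ (by norm_num)), sub_eq_zero, conj_eq_exp_neg_I_mul_mul_iff,
    padePoly, sum_ofReal_mul_I_mul_pow, im_exp_neg_I_mul_div_two_mul, sub_eq_zero, eq_comm,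
    show (n + 1 + 1) / 2 = n / 2 + 1 by omega, show (n + 1) / 2 = (n - 1) / 2 + 1 by omega]
  -- `2 * n - (2 * ℓ + 1)` and `2 * n - 2 * ℓ - 1` agree definitionally
  rfl
end

section
/- Let f: [0,1] → ℝ be positive and continuously differentiable with f'(t) < 0 for all t ∈ [0,1], and define F(s) = ∫₀¹ e^{st} f(t) dt for s ∈ ℂ. If s ∈ ℂ satisfies F(s) = 0, then Re(s) > 0. -/
/-!
Integrating by parts, `F(s) = 0` becomes `f 0 - e^s f 1 = ∫₀¹ e^{st} w(t) dt` with the positive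
weight `w = -f'`, whose integral is `f 0 - f 1`. If `Re s ≤ 0` then `|e^{st}| ≤ 1` for `t ≥ 0`, so
the left side has modulus at least `f 0 - f 1` while the right side has modulus at most
`∫₀¹ w = f 0 - f 1`. Equality in this triangle inequality would force `e^{st}` to have constant
phase and modulus `1` on `[0, 1]`, i.e. `e^{st} ≡ 1`, i.e. `s = 0`; but `F(0) = ∫₀¹ f > 0`.
-/

open Set Complex ComplexConjugate intervalIntegral

namespace Complex

lemma eq_of_norm_le_of_le_re {z : ℂ} {r : ℝ} (hn : ‖z‖ ≤ r) (hr : r ≤ z.re) : z = r := by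
  have hre : z.re = ‖z‖ := le_antisymm (re_le_norm z) (hn.trans hr)
  have him : z.im = 0 :=
    abs_re_eq_norm.1 (by rw [abs_of_nonneg ((norm_nonneg z).trans_eq hre.symm), hre])
  apply ext <;> simp only [ofReal_re, ofReal_im, him]
  linarith [re_le_norm z]

lemma norm_exp_mul_le_one {s : ℂ} (hs : s.re ≤ 0) {t : ℝ} (ht : 0 ≤ t) : ‖exp (s * t)‖ ≤ 1 := by
  rw [norm_exp, Real.exp_le_one_iff, re_mul_ofReal]
  exact mul_nonpos_of_nonpos_of_nonneg hs ht

lemma sub_le_norm_ofReal_sub_mul {x y : ℝ} (hy : 0 ≤ y) {z : ℂ} (hz : ‖z‖ ≤ 1) :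
    x - y ≤ ‖(x : ℂ) - z * y‖ :=
  calc x - y ≤ ‖(x : ℂ)‖ - ‖z * y‖ := by
        rw [norm_mul, norm_real, norm_real, Real.norm_of_nonneg hy]
        nlinarith [Real.le_norm_self x]
    _ ≤ _ := norm_sub_norm_le _ _

lemma hasDerivAt_exp_mul_ofReal (s : ℂ) (t : ℝ) :
    HasDerivAt (fun t : ℝ => exp (s * t)) (s * exp (s * t)) t := by
  simpa [mul_comm] using ((hasDerivAt_id t).ofReal_comp.const_mul s).cexp

lemma eq_zero_of_exp_mul_eq_one_on_Icc {s : ℂ} {b : ℝ} (hb : 0 < b)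
    (h : ∀ t ∈ Icc 0 b, exp (s * t) = 1) : s = 0 := by
  have h0 : (0 : ℝ) ∈ Icc 0 b := left_mem_Icc.2 hb.le
  have hexp : HasDerivWithinAt (fun t : ℝ => exp (s * t)) s (Icc 0 b) 0 := by
    simpa using (hasDerivAt_exp_mul_ofReal s 0).hasDerivWithinAt
  have hone : HasDerivWithinAt (fun t : ℝ => exp (s * t)) 0 (Icc 0 b) 0 :=
    (hasDerivWithinAt_const (0 : ℝ) _ (1 : ℂ)).congr_of_mem h h0
  exact (uniqueDiffOn_Icc hb 0 h0).eq_deriv _ hexp hone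

end Complex

theorem integral_cexp_mul_deriv (s : ℂ) {f f' : ℝ → ℝ} {a b : ℝ} (hab : a ≤ b)
    (hf : ContinuousOn f (Icc a b)) (hf' : ContinuousOn f' (Icc a b))
    (hd : ∀ t ∈ Ioo a b, HasDerivAt f (f' t) t) :
    ∫ t in a..b, exp (s * t) * f' t =
      exp (s * b) * f b - exp (s * a) * f a - s * ∫ t in a..b, exp (s * t) * f t := by
  have hibp := integral_mul_deriv_eq_deriv_mul_of_hasDerivAt (a := a) (b := b)
    (u := fun t : ℝ => exp (s * t)) (v := fun t => (f t : ℂ)) (v' := fun t => (f' t : ℂ))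
    (by fun_prop) (by rw [uIcc_of_le hab]; exact continuous_ofReal.comp_continuousOn hf)
    (fun t _ => hasDerivAt_exp_mul_ofReal s t)
    (fun t ht => (hd t (by simpa [hab] using ht)).ofReal_comp)
    ((by fun_prop : Continuous _).intervalIntegrable _ _)
    ((continuous_ofReal.comp_continuousOn hf').intervalIntegrable_of_Icc hab)
  simp_rw [hibp, mul_assoc, integral_const_mul]

theorem norm_integral_cexp_mul_lt {s : ℂ} (hs0 : s ≠ 0) (hs : s.re ≤ 0) {b : ℝ} (hb : 0 < b)
    {w : ℝ → ℝ} (hwc : ContinuousOn w (Icc 0 b)) (hw : ∀ t ∈ Icc 0 b, 0 < w t) :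
    ‖∫ t in (0 : ℝ)..b, exp (s * t) * w t‖ < ∫ t in (0 : ℝ)..b, w t := by
  set I := ∫ t in (0 : ℝ)..b, exp (s * t) * w t
  have hwC : ContinuousOn (fun t : ℝ => exp (s * t) * w t) (Icc 0 b) :=
    (by fun_prop : Continuous fun t : ℝ => exp (s * t)).continuousOn.mul
      (continuous_ofReal.comp_continuousOn hwc)
  rcases eq_or_ne I 0 with hI | hI
  · rw [hI, norm_zero]
    exact intervalIntegral_pos_of_pos_on (hwc.intervalIntegrable_of_Icc hb.le)
      (fun t ht => hw t (Ioo_subset_Icc_self ht)) hb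
  set φ : ℝ → ℝ := fun t => (conj I * exp (s * t)).re
  have hnorm : ∀ t ∈ Icc 0 b, ‖conj I * exp (s * t)‖ ≤ ‖I‖ := fun t ht => by
    rw [norm_mul, RCLike.norm_conj]
    exact mul_le_of_le_one_right (norm_nonneg I) (norm_exp_mul_le_one hs ht.1)
  have hφ_le : ∀ t ∈ Icc 0 b, φ t ≤ ‖I‖ := fun t ht => (re_le_norm _).trans (hnorm t ht)
  have hφ_lt : ∃ c ∈ Icc 0 b, φ c < ‖I‖ := by
    by_contra! h
    have hconst : ∀ t ∈ Icc 0 b, conj I * exp (s * t) = ‖I‖ := fun t ht =>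
      eq_of_norm_le_of_le_re (hnorm t ht) (h t ht)
    have hconj : conj I = ‖I‖ := by simpa using hconst 0 (left_mem_Icc.2 hb.le)
    refine hs0 (eq_zero_of_exp_mul_eq_one_on_Icc hb fun t ht => ?_)
    have ht' := hconst t ht
    rw [hconj] at ht'
    exact (mul_eq_left₀ (by simpa using hI)).1 ht'
  have hsq : ‖I‖ ^ 2 = ∫ t in (0 : ℝ)..b, φ t * w t :=
    calc ‖I‖ ^ 2 = (conj I * I).re := by rw [conj_mul', ← ofReal_pow, ofReal_re]
      _ = ∫ t in (0 : ℝ)..b, (conj I * (exp (s * t) * w t)).re := by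
        rw [← integral_const_mul]
        exact (intervalIntegral_re ((hwC.intervalIntegrable_of_Icc hb.le).const_mul _)).symm
      _ = ∫ t in (0 : ℝ)..b, φ t * w t :=
        integral_congr fun t _ => by simp only [φ, ← mul_assoc, re_mul_ofReal]
  have hmain : ∫ t in (0 : ℝ)..b, φ t * w t < ∫ t in (0 : ℝ)..b, ‖I‖ * w t := by
    refine integral_lt_integral_of_continuousOn_of_le_of_exists_lt hb
      ((by fun_prop : Continuous φ).continuousOn.mul hwc) (continuousOn_const.mul hwc)
      (fun t ht => mul_le_mul_of_nonneg_right (hφ_le t (Ioc_subset_Icc_self ht))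
        (hw t (Ioc_subset_Icc_self ht)).le) ?_
    obtain ⟨c, hc, hlt⟩ := hφ_lt
    exact ⟨c, hc, mul_lt_mul_of_pos_right hlt (hw c hc)⟩
  rw [integral_const_mul, ← hsq, sq] at hmain
  exact lt_of_mul_lt_mul_left hmain (norm_nonneg I)

theorem stmt_19 (f : ℝ → ℝ)
    (hpos : ∀ t ∈ Set.Icc (0:ℝ) 1, 0 < f t)
    (hdiff : ContDiffOn ℝ 1 f (Set.Icc (0:ℝ) 1))
    (hder : ∀ t ∈ Set.Icc (0:ℝ) 1, derivWithin f (Set.Icc (0:ℝ) 1) t < 0)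
    (s : ℂ)
    (hF : (∫ t in (0:ℝ)..1, Complex.exp (s * t) * (f t : ℂ)) = 0) :
    0 < s.re := by
  by_contra! hre
  have hs0 : s ≠ 0 := by
    rintro rfl
    have hint : 0 < ∫ t in (0 : ℝ)..1, f t :=
      intervalIntegral_pos_of_pos_on (hdiff.continuousOn.intervalIntegrable_of_Icc zero_le_one)
        (fun t ht => hpos t (Ioo_subset_Icc_self ht)) one_pos
    simp only [zero_mul, Complex.exp_zero, one_mul, integral_ofReal, ofReal_eq_zero] at hF
    exact hint.ne' hF
  set f' := derivWithin f (Icc (0 : ℝ) 1)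
  have hf'c : ContinuousOn f' (Icc 0 1) :=
    hdiff.continuousOn_derivWithin (uniqueDiffOn_Icc one_pos) le_rfl
  have hd : ∀ t ∈ Ioo (0 : ℝ) 1, HasDerivAt f (f' t) t := fun t ht =>
    (hdiff.differentiableOn one_ne_zero t (Ioo_subset_Icc_self ht)).hasDerivWithinAt.hasDerivAt
      (Icc_mem_nhds ht.1 ht.2)
  have hlt := norm_integral_cexp_mul_lt hs0 hre one_pos (w := fun t => -f' t) hf'c.neg
    fun t ht => neg_pos.2 (hder t ht)
  have hI : ∫ t in (0 : ℝ)..1, exp (s * t) * ((-f' t : ℝ) : ℂ) = f 0 - exp s * f 1 := by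
    simp only [ofReal_neg, mul_neg, integral_neg,
      integral_cexp_mul_deriv s zero_le_one hdiff.continuousOn hf'c hd, hF]
    simp
  have hw : ∫ t in (0 : ℝ)..1, -f' t = f 0 - f 1 := by
    rw [integral_neg, integral_eq_sub_of_hasDerivAt_of_le zero_le_one hdiff.continuousOn hd
      (hf'c.intervalIntegrable_of_Icc zero_le_one), neg_sub]
  rw [hI, hw] at hlt
  have hexp : ‖exp s‖ ≤ 1 := by simpa using norm_exp_mul_le_one hre zero_le_one
  linarith [sub_le_norm_ofReal_sub_mul (hpos 1 (right_mem_Icc.2 zero_le_one)).le hexp (x := f 0)]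
end
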